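/- arXiv:2511.04855 — 3 statements merged into one kernel-verified Lean document; each statement's English description precedes it below -/
import Mathlib

section
/- Let q* : 𝒳 → 𝒴 ∪ {reject} be the aleatoric reject-option predictor defined by q*(x) = h*(x) if r*(x) ≤ ε and q*(x) = reject otherwise. Then q* minimizes the expected reject-option risk: for every measurable reject-option predictor q : 𝒳 → 𝒴 ∪ {reject} whose loss is μ-integrable, R^ε(q*) ≤ R^ε(q). -/
open MeasureTheory ProbabilityTheory ENNReal NNReal

/-- The natural σ-algebra on `Option 𝒴 = 𝒴 ∪ {reject}`: a set is measurable iff its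
preimage under `some` is measurable (this makes `{none}` measurable and `some` a
measurable embedding). -/
instance optionMeasurableSpace {α : Type*} [m : MeasurableSpace α] :
    MeasurableSpace (Option α) := m.map some

/-- The aleatoric reject-option predictor `q*(x) = h*(x)` if `r*(x) ≤ ε` and `reject`
(modeled as `none`) otherwise, minimizes the expected reject-option risk
`R^ε(q) = ∫ ℓ^ε(y, q(x)) dμ(x,y)` among all measurable reject-option predictors. -/
theorem aleatoric_reject_option_optimal
    {𝒳 𝒴 : Type*} [MeasurableSpace 𝒳] [MeasurableSpace 𝒴]
    (μ : Measure (𝒳 × 𝒴)) [IsProbabilityMeasure μ]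
    (κ : ProbabilityTheory.Kernel 𝒳 𝒴) [ProbabilityTheory.IsMarkovKernel κ]
    (hdis : μ = μ.fst ⊗ₘ κ)
    (ℓ : 𝒴 → 𝒴 → ℝ≥0) (hℓ : Measurable (Function.uncurry ℓ))
    (ε : ℝ≥0)
    (hstar : 𝒳 → 𝒴) (hhm : Measurable hstar)
    (hbayes : ∀ (x : 𝒳) (yh : 𝒴),
      ∫⁻ y, (ℓ y (hstar x) : ℝ≥0∞) ∂(κ x) ≤ ∫⁻ y, (ℓ y yh : ℝ≥0∞) ∂(κ x))
    (rstar : 𝒳 → ℝ≥0∞)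
    (hrdef : ∀ x, rstar x = ∫⁻ y, (ℓ y (hstar x) : ℝ≥0∞) ∂(κ x))
    (hrm : Measurable rstar)
    (R : (𝒳 → Option 𝒴) → ℝ≥0∞)
    (hR : ∀ q : 𝒳 → Option 𝒴,
      R q = ∫⁻ p : 𝒳 × 𝒴, (q p.1).elim (ε : ℝ≥0∞) (fun yh => (ℓ p.2 yh : ℝ≥0∞)) ∂μ)
    (qstar : 𝒳 → Option 𝒴)
    (hqstar : ∀ x, qstar x = if rstar x ≤ (ε : ℝ≥0∞) then some (hstar x) else none)
    (hfinstar : R qstar ≠ ∞) :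
    ∀ q : 𝒳 → Option 𝒴, Measurable q → R q ≠ ∞ → R qstar ≤ R q := by
  intro q hq _
  classical
  -- the rejection set of q
  have hmnone : MeasurableSet ({none} : Set (Option 𝒴)) := by
    show MeasurableSet (some ⁻¹' ({none} : Set (Option 𝒴)))
    have : (some ⁻¹' ({none} : Set (Option 𝒴))) = (∅ : Set 𝒴) := by
      ext y; simp
    rw [this]; exact MeasurableSet.empty
  have hA : MeasurableSet {x | q x = none} := by
    have := hq hmnone
    simpa [Set.preimage, Set.mem_singleton_iff] using this
  -- measurable extraction of q on the acceptance set
  set qh : 𝒳 → 𝒴 := fun x => (q x).getD (hstar x) with hqhdef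
  have hqh : Measurable qh := by
    intro s hs
    have h1 : MeasurableSet (some '' s : Set (Option 𝒴)) := by
      show MeasurableSet (some ⁻¹' (some '' s))
      simpa [Set.preimage_image_eq s (Option.some_injective _)] using hs
    have heq : qh ⁻¹' s =
        ({x | q x = none} ∩ hstar ⁻¹' s) ∪ ({x | q x = none}ᶜ ∩ q ⁻¹' (some '' s)) := by
      ext x
      cases hqx : q x with
      | none => simp [hqhdef, hqx]
      | some y => simp [hqhdef, hqx, Option.some_injective 𝒴 |>.mem_set_image]
    rw [heq]
    exact (hA.inter (hhm hs)).union (hA.compl.inter (hq h1))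
  -- rewrite R q
  have hRq : R q = ∫⁻ x, (if q x = none then (ε : ℝ≥0∞) else ∫⁻ y, (ℓ y (qh x) : ℝ≥0∞) ∂(κ x)) ∂μ.fst := by
    rw [hR q]
    have hpt : (fun p : 𝒳 × 𝒴 => (q p.1).elim (ε : ℝ≥0∞) (fun yh => (ℓ p.2 yh : ℝ≥0∞)))
        = fun p : 𝒳 × 𝒴 => if q p.1 = none then (ε : ℝ≥0∞) else (ℓ p.2 (qh p.1) : ℝ≥0∞) := by
      funext p
      cases hqx : q p.1 with
      | none => simp [hqx]
      | some y => simp [hqx, hqhdef]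
    rw [hpt, hdis]
    have hfm : Measurable (fun p : 𝒳 × 𝒴 =>
        if q p.1 = none then (ε : ℝ≥0∞) else (ℓ p.2 (qh p.1) : ℝ≥0∞)) := by
      apply Measurable.ite (hA.preimage measurable_fst) measurable_const
      exact (measurable_coe_nnreal_ennreal.comp hℓ).comp
        ((measurable_snd.prodMk (hqh.comp measurable_fst)))
    rw [Measure.lintegral_compProd hfm, Measure.fst_compProd]
    refine lintegral_congr fun x => ?_
    by_cases hx : q x = none
    · simp [hx]
    · simp [hx]
  -- rewrite R qstar
  have hRqs : R qstar = ∫⁻ x, (if rstar x ≤ (ε : ℝ≥0∞) then rstar x else (ε : ℝ≥0∞)) ∂μ.fst := by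
    rw [hR qstar]
    have hpt : (fun p : 𝒳 × 𝒴 => (qstar p.1).elim (ε : ℝ≥0∞) (fun yh => (ℓ p.2 yh : ℝ≥0∞)))
        = fun p : 𝒳 × 𝒴 => if rstar p.1 ≤ (ε : ℝ≥0∞) then (ℓ p.2 (hstar p.1) : ℝ≥0∞)
            else (ε : ℝ≥0∞) := by
      funext p
      rw [hqstar p.1]
      by_cases hx : rstar p.1 ≤ (ε : ℝ≥0∞) <;> simp [hx]
    rw [hpt, hdis]
    have hsm : MeasurableSet {x : 𝒳 | rstar x ≤ (ε : ℝ≥0∞)} :=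
      measurableSet_le hrm measurable_const
    have hfm : Measurable (fun p : 𝒳 × 𝒴 =>
        if rstar p.1 ≤ (ε : ℝ≥0∞) then (ℓ p.2 (hstar p.1) : ℝ≥0∞) else (ε : ℝ≥0∞)) := by
      apply Measurable.ite (hsm.preimage measurable_fst)
      · exact (measurable_coe_nnreal_ennreal.comp hℓ).comp
          ((measurable_snd.prodMk (hhm.comp measurable_fst)))
      · exact measurable_const
    rw [Measure.lintegral_compProd hfm, Measure.fst_compProd]
    refine lintegral_congr fun x => ?_
    by_cases hx : rstar x ≤ (ε : ℝ≥0∞)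
    · simp [hx, ← hrdef x]
    · simp [hx]
  rw [hRq, hRqs]
  refine lintegral_mono fun x => ?_
  by_cases hx : q x = none
  · simp only [hx, if_true]
    by_cases hr : rstar x ≤ (ε : ℝ≥0∞) <;> simp [hr] <;> try exact hr
  · simp only [hx, if_false]
    have hb : rstar x ≤ ∫⁻ y, (ℓ y (qh x) : ℝ≥0∞) ∂(κ x) := by
      rw [hrdef x]; exact hbayes x (qh x)
    by_cases hr : rstar x ≤ (ε : ℝ≥0∞)
    · simpa [hr] using hb
    · simp only [hr, if_false]
      exact le_trans (le_of_not_ge hr) hb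
end

section
/- Let Q_B : 𝒳 × 𝒟 → 𝒴 ∪ {reject} be the Bayesian reject-option predictor defined by Q_B(x, D) = H_B(x, D) if T(x, D) ≤ ε and Q_B(x, D) = reject otherwise. Then Q_B minimizes the Bayesian expected reject-option risk: for every measurable reject-option predictor Q : 𝒳 × 𝒟 → 𝒴 ∪ {reject} whose loss is μ-integrable, R_L^ε(Q_B) ≤ R_L^ε(Q). -/
/-!
Since `κ` disintegrates `μ` along `(x, D)`, the risk of any measurable `Q` equals the integral
over the `(x, D)`-marginal of the conditional risk of the decision `Q (x, D)`: `ε` for a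
rejection and `∫ ℓ(y, ŷ) dκ(x, D)` for a prediction `ŷ`. The conditional risk of `Q_B` is
`min (T, ε)`, which is pointwise the least possible, because `T` is the least conditional risk of
any prediction; integrating the pointwise inequality gives the theorem.
-/

open MeasureTheory ProbabilityTheory ENNReal NNReal

section OptionMeasurable

variable {α β γ : Type*} [MeasurableSpace α] [MeasurableSpace β] [MeasurableSpace γ]

theorem measurable_some : Measurable (some : β → Option β) := fun _ hs => hs

theorem measurableSet_singleton_none : MeasurableSet ({none} : Set (Option β)) := by
  change MeasurableSet (some ⁻¹' {none})
  rw [show some ⁻¹' ({none} : Set (Option β)) = ∅ by ext; simp]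
  exact MeasurableSet.empty

theorem measurable_option_getD (b₀ : β) : Measurable fun o : Option β => o.getD b₀ := by
  intro s hs
  change MeasurableSet (some ⁻¹' ((fun o : Option β => o.getD b₀) ⁻¹' s))
  exact hs

theorem Measurable.option_elim {f : α → Option β} {c : α → γ} {g : α → β → γ}
    (hf : Measurable f) (hc : Measurable c) (hg : Measurable (Function.uncurry g)) :
    Measurable fun a => (f a).elim (c a) (g a) := by
  rcases isEmpty_or_nonempty β with hβ | ⟨⟨b₀⟩⟩
  · simpa [Subsingleton.elim (f _) none] using hc
  have hsplit : (fun a => (f a).elim (c a) (g a))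
      = {a | f a = none}.piecewise c (fun a => g a ((f a).getD b₀)) := by
    funext a
    rcases hfa : f a with _ | b <;> simp [Set.piecewise, hfa]
  rw [hsplit]
  exact Measurable.piecewise (hf measurableSet_singleton_none) hc
    (hg.comp (measurable_id.prodMk ((measurable_option_getD b₀).comp hf)))

end OptionMeasurable

theorem lintegral_option_elim_const {β γ : Type*} [MeasurableSpace β] (ν : Measure β)
    [IsProbabilityMeasure ν] (c : ℝ≥0∞) (g : β → γ → ℝ≥0∞) (o : Option γ) :
    ∫⁻ y, o.elim c (g y) ∂ν = o.elim c fun b => ∫⁻ y, g y b ∂ν := by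
  cases o <;> simp

theorem lintegral_comp_eq_lintegral_kernel {Ω Z 𝒴 : Type*} [MeasurableSpace Ω]
    [MeasurableSpace Z] [MeasurableSpace 𝒴] {μ : Measure Ω} [SFinite μ]
    {κ : Kernel Z 𝒴} [IsSFiniteKernel κ] {X : Ω → Z} {Y : Ω → 𝒴}
    (hX : Measurable X) (hY : Measurable Y)
    (hdis : μ.map (fun ω => (X ω, Y ω)) = μ.map X ⊗ₘ κ)
    {F : Z × 𝒴 → ℝ≥0∞} (hF : Measurable F) :
    ∫⁻ ω, F (X ω, Y ω) ∂μ = ∫⁻ z, ∫⁻ y, F (z, y) ∂κ z ∂μ.map X := by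
  rw [← Measure.lintegral_compProd hF, ← hdis, lintegral_map hF (hX.prodMk hY)]

/-- Chow's rule: its conditional risk is `min (r b₀) ε`. -/
theorem elim_ite_le_elim_of_forall_le {β : Type*} (r : β → ℝ≥0∞) (ε : ℝ≥0∞) {b₀ : β}
    (hmin : ∀ b, r b₀ ≤ r b) (o : Option β) :
    (if r b₀ ≤ ε then some b₀ else none).elim ε r ≤ o.elim ε r := by
  rcases o with _ | b <;> split_ifs with h
  exacts [h, le_rfl, hmin b, (not_le.mp h).le.trans (hmin b)]

theorem bayesian_reject_option_optimal_general
    {Θ 𝒟 𝒳 𝒴 : Type*} [MeasurableSpace Θ] [MeasurableSpace 𝒟]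
    [MeasurableSpace 𝒳] [MeasurableSpace 𝒴]
    (μ : Measure (Θ × 𝒟 × 𝒳 × 𝒴)) [IsProbabilityMeasure μ]
    (κ : ProbabilityTheory.Kernel (𝒳 × 𝒟) 𝒴) [ProbabilityTheory.IsMarkovKernel κ]
    (hdis : μ.map (fun p : Θ × 𝒟 × 𝒳 × 𝒴 => ((p.2.2.1, p.2.1), p.2.2.2))
      = (μ.map (fun p : Θ × 𝒟 × 𝒳 × 𝒴 => (p.2.2.1, p.2.1))) ⊗ₘ κ)
    (ℓ : 𝒴 → 𝒴 → ℝ≥0) (hℓ : Measurable (Function.uncurry ℓ))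
    (ε : ℝ≥0)
    (HB : 𝒳 × 𝒟 → 𝒴) (hHBm : Measurable HB)
    (hbayes : ∀ (z : 𝒳 × 𝒟) (yh : 𝒴),
      ∫⁻ y, (ℓ y (HB z) : ℝ≥0∞) ∂(κ z) ≤ ∫⁻ y, (ℓ y yh : ℝ≥0∞) ∂(κ z))
    (T : 𝒳 × 𝒟 → ℝ≥0∞)
    (hT : ∀ z, T z = ∫⁻ y, (ℓ y (HB z) : ℝ≥0∞) ∂(κ z))
    (hTm : Measurable T)
    (R : (𝒳 × 𝒟 → Option 𝒴) → ℝ≥0∞)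
    (hR : ∀ Q : 𝒳 × 𝒟 → Option 𝒴,
      R Q = ∫⁻ p : Θ × 𝒟 × 𝒳 × 𝒴,
        (Q (p.2.2.1, p.2.1)).elim (ε : ℝ≥0∞) (fun yh => (ℓ p.2.2.2 yh : ℝ≥0∞)) ∂μ)
    (QB : 𝒳 × 𝒟 → Option 𝒴)
    (hQB : ∀ z, QB z = if T z ≤ (ε : ℝ≥0∞) then some (HB z) else none) :
    ∀ Q : 𝒳 × 𝒟 → Option 𝒴, Measurable Q → R Q ≠ ∞ → R QB ≤ R Q := by
  have hX : Measurable fun p : Θ × 𝒟 × 𝒳 × 𝒴 => (p.2.2.1, p.2.1) := by fun_prop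
  have hrisk : ∀ P : 𝒳 × 𝒟 → Option 𝒴, Measurable P →
      R P = ∫⁻ z, (P z).elim ε (fun yh => ∫⁻ y, (ℓ y yh : ℝ≥0∞) ∂κ z)
        ∂μ.map fun p : Θ × 𝒟 × 𝒳 × 𝒴 => (p.2.2.1, p.2.1) := by
    intro P hP
    have hF : Measurable fun q : (𝒳 × 𝒟) × 𝒴 =>
        (P q.1).elim (ε : ℝ≥0∞) (fun yh => (ℓ q.2 yh : ℝ≥0∞)) :=
      (hP.comp measurable_fst).option_elim measurable_const (by fun_prop)
    rw [hR]
    exact (lintegral_comp_eq_lintegral_kernel hX (by fun_prop) hdis hF).trans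
      (by simp only [lintegral_option_elim_const])
  have hQBm : Measurable QB := by
    rw [funext hQB]
    exact Measurable.ite (measurableSet_le hTm measurable_const)
      (measurable_some.comp hHBm) measurable_const
  intro Q hQ _
  rw [hrisk QB hQBm, hrisk Q hQ]
  refine lintegral_mono fun z => ?_
  rw [hQB, hT]
  exact elim_ite_le_elim_of_forall_le _ _ (hbayes z) (Q z)

/-- The Bayesian reject-option predictor `Q_B(x,D) = H_B(x,D)` if `T(x,D) ≤ ε` and
`reject` (modeled as `none`) otherwise, minimizes the Bayesian expected reject-option risk
`R_L^ε(Q) = ∫ ℓ^ε(y, Q(x,D)) dμ(θ,D,x,y)` among all measurable reject-option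
predictors. Here a sample from `μ` is `p = (θ, D, x, y)` with `p.1 = θ`, `p.2.1 = D`,
`p.2.2.1 = x`, `p.2.2.2 = y`, and the Markov kernel `κ` from `𝒳 × 𝒟` to `𝒴` is the
predictive distribution `p(y | x, D)`, i.e. the pushforward of `μ` onto
`(𝒳 × 𝒟) × 𝒴` is the composition of the `(x,D)`-marginal of `μ` with `κ`. -/
theorem bayesian_reject_option_optimal
    {Θ 𝒟 𝒳 𝒴 : Type*} [MeasurableSpace Θ] [MeasurableSpace 𝒟]
    [MeasurableSpace 𝒳] [MeasurableSpace 𝒴]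
    (μ : Measure (Θ × 𝒟 × 𝒳 × 𝒴)) [IsProbabilityMeasure μ]
    (κ : ProbabilityTheory.Kernel (𝒳 × 𝒟) 𝒴) [ProbabilityTheory.IsMarkovKernel κ]
    (hdis : μ.map (fun p : Θ × 𝒟 × 𝒳 × 𝒴 => ((p.2.2.1, p.2.1), p.2.2.2))
      = (μ.map (fun p : Θ × 𝒟 × 𝒳 × 𝒴 => (p.2.2.1, p.2.1))) ⊗ₘ κ)
    (ℓ : 𝒴 → 𝒴 → ℝ≥0) (hℓ : Measurable (Function.uncurry ℓ))
    (ε : ℝ≥0)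
    (HB : 𝒳 × 𝒟 → 𝒴) (hHBm : Measurable HB)
    (hbayes : ∀ (z : 𝒳 × 𝒟) (yh : 𝒴),
      ∫⁻ y, (ℓ y (HB z) : ℝ≥0∞) ∂(κ z) ≤ ∫⁻ y, (ℓ y yh : ℝ≥0∞) ∂(κ z))
    (T : 𝒳 × 𝒟 → ℝ≥0∞)
    (hT : ∀ z, T z = ∫⁻ y, (ℓ y (HB z) : ℝ≥0∞) ∂(κ z))
    (hTm : Measurable T)
    (R : (𝒳 × 𝒟 → Option 𝒴) → ℝ≥0∞)
    (hR : ∀ Q : 𝒳 × 𝒟 → Option 𝒴,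
      R Q = ∫⁻ p : Θ × 𝒟 × 𝒳 × 𝒴,
        (Q (p.2.2.1, p.2.1)).elim (ε : ℝ≥0∞) (fun yh => (ℓ p.2.2.2 yh : ℝ≥0∞)) ∂μ)
    (QB : 𝒳 × 𝒟 → Option 𝒴)
    (hQB : ∀ z, QB z = if T z ≤ (ε : ℝ≥0∞) then some (HB z) else none)
    (hfin : R QB ≠ ∞) :
    ∀ Q : 𝒳 × 𝒟 → Option 𝒴, Measurable Q → R Q ≠ ∞ → R QB ≤ R Q :=
  bayesian_reject_option_optimal_general μ κ hdis ℓ hℓ ε HB hHBm hbayes T hT hTm R hR QB hQB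
end

section
/- Under the 0/1 loss, the conditional regret of the Bayesian predictor equals the expected maximum conditional probability minus the maximum predictive probability: ∫_Θ (Σ_{y ∈ 𝒴} p(θ)(y) · (𝟙[y ≠ ŷ_B] − 𝟙[y ≠ ŷ(θ)])) dπ(θ) = ∫_Θ (max_{y ∈ 𝒴} p(θ)(y)) dπ(θ) − max_{y ∈ 𝒴} p̄(y), i.e., the epistemic uncertainty E = 𝔼_{θ∼π}[max_y p(y|x,θ)] − max_y p̄(y). -/
open MeasureTheory ProbabilityTheory NNReal

/-- Under the 0/1 loss, the conditional regret of the Bayesian predictor `ŷ_B` equals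
the expected maximum conditional probability minus the maximum predictive probability:
`∫_Θ Σ_y p(θ)(y)·(𝟙[y ≠ ŷ_B] − 𝟙[y ≠ ŷ(θ)]) dπ(θ)
  = ∫_Θ max_y p(θ)(y) dπ(θ) − max_y p̄(y)`. -/
theorem zero_one_loss_epistemic_uncertainty
    {𝒴 Θ : Type*} [Fintype 𝒴] [Nonempty 𝒴] [DecidableEq 𝒴] [MeasurableSpace 𝒴] [MeasurableSpace Θ]
    (π : Measure Θ) [IsProbabilityMeasure π]
    (p : Θ → 𝒴 → ℝ≥0) (hpm : ∀ y, Measurable fun θ => p θ y)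
    (hsum : ∀ θ, ∑ y, p θ y = 1)
    (pbar : 𝒴 → ℝ) (hpbar : ∀ y, pbar y = ∫ θ, (p θ y : ℝ) ∂π)
    (yhat : Θ → 𝒴) (hym : Measurable yhat)
    (hymax : ∀ θ, (p θ (yhat θ) : ℝ) = ⨆ y, (p θ y : ℝ))
    (yB : 𝒴) (hyB : pbar yB = ⨆ y, pbar y)
    (hint : Integrable (fun θ => ⨆ y, (p θ y : ℝ)) π) :
    ∫ θ, (∑ y, (p θ y : ℝ) *
        ((if y ≠ yB then (1 : ℝ) else 0) - (if y ≠ yhat θ then (1 : ℝ) else 0))) ∂π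
      = (∫ θ, (⨆ y, (p θ y : ℝ)) ∂π) - ⨆ y, pbar y := by
  have hsumR : ∀ θ, ∑ y, (p θ y : ℝ) = 1 := by
    intro θ
    rw [← NNReal.coe_sum, hsum θ, NNReal.coe_one]
  have key : ∀ θ, (∑ y, (p θ y : ℝ) *
      ((if y ≠ yB then (1 : ℝ) else 0) - (if y ≠ yhat θ then (1 : ℝ) else 0)))
      = (⨆ y, (p θ y : ℝ)) - (p θ yB : ℝ) := by
    intro θ
    have h1 : ∀ a : 𝒴, (∑ y, (p θ y : ℝ) * (if y ≠ a then (1 : ℝ) else 0))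
        = 1 - (p θ a : ℝ) := by
      intro a
      have : (∑ y, (p θ y : ℝ) * (if y ≠ a then (1 : ℝ) else 0))
          = ∑ y, ((p θ y : ℝ) - if y = a then (p θ y : ℝ) else 0) := by
        apply Finset.sum_congr rfl
        intro y _
        by_cases h : y = a <;> simp [h]
      rw [this, Finset.sum_sub_distrib, Finset.sum_ite_eq' Finset.univ a, hsumR θ]
      simp
    simp only [mul_sub, Finset.sum_sub_distrib, h1, hymax θ]
    ring
  simp only [key]
  have hbdd : ∀ θ, (p θ yB : ℝ) ≤ ⨆ y, (p θ y : ℝ) := by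
    intro θ
    exact le_ciSup (f := fun y => (p θ y : ℝ)) (Set.Finite.bddAbove (Set.finite_range _)) yB
  have hintB : Integrable (fun θ => (p θ yB : ℝ)) π := by
    apply hint.mono ((hpm yB).coe_nnreal_real.aestronglyMeasurable)
    filter_upwards with θ
    rw [Real.norm_eq_abs, Real.norm_eq_abs, abs_of_nonneg (p θ yB).coe_nonneg,
      abs_of_nonneg ((p θ yB).coe_nonneg.trans (hbdd θ))]
    exact hbdd θ
  rw [integral_sub hint hintB, ← hpbar yB, hyB]
end
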